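/- arXiv:2403.05711 — 2 statements merged into one kernel-verified Lean document; each statement's English description precedes it below -/
import Mathlib

section
/- Naturality of gradient descent: let φ : N → M be a function between finite sets, f : ℝ^N → ℝ continuously differentiable, and γ > 0. Then the discrete dynamical system y ↦ y - γ∇(f ∘ φ^*)(y) on ℝ^M equals the system y ↦ y + φ_*((x ↦ x - γ∇f(x))(φ^*(y)) - φ^*(y)). -/
/-! Since `φ_*` is the adjoint of `φ^*`, the chain rule gives `∇(f ∘ φ^*) = φ_* ∘ ∇f ∘ φ^*`;
the two systems then agree by linearity of `φ_*`. -/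

/-- Pushforward along `φ : N → M` on Euclidean space: sums inputs over preimages. -/
noncomputable def pushE {N M : Type*} [Fintype N] [Fintype M] [DecidableEq M] (φ : N → M) :
    EuclideanSpace ℝ N →ₗ[ℝ] EuclideanSpace ℝ M where
  toFun x := WithLp.toLp 2 (fun j => ∑ i, if φ i = j then x i else 0)
  map_add' x y := by
    ext j
    simp only [PiLp.add_apply, PiLp.toLp_apply]
    rw [← Finset.sum_add_distrib]
    exact Finset.sum_congr rfl fun i _ => by split_ifs <;> simp
  map_smul' c x := by
    ext j
    simp only [PiLp.toLp_apply, PiLp.smul_apply, smul_eq_mul, RingHom.id_apply]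
    rw [Finset.mul_sum]
    exact Finset.sum_congr rfl fun i _ => by split_ifs <;> simp

/-- Pullback along `φ : N → M` on Euclidean space: precomposition with `φ`. -/
def pullE {N M : Type*} [Fintype N] [Fintype M] (φ : N → M) :
    EuclideanSpace ℝ M →ₗ[ℝ] EuclideanSpace ℝ N where
  toFun y := WithLp.toLp 2 (fun i => y (φ i))
  map_add' _ _ := rfl
  map_smul' _ _ := rfl


open InnerProductSpace

theorem HasGradientAt.comp_continuousLinearMap {𝕜 E F : Type*} [RCLike 𝕜]
    [NormedAddCommGroup E] [InnerProductSpace 𝕜 E] [CompleteSpace E]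
    [NormedAddCommGroup F] [InnerProductSpace 𝕜 F] [CompleteSpace F]
    {f : F → 𝕜} {g : F} (L : E →L[𝕜] F) {x : E} (hf : HasGradientAt f g (L x)) :
    HasGradientAt (f ∘ L) (L.adjoint g) x := by
  have h_dual : toDual 𝕜 E (L.adjoint g) = (toDual 𝕜 F g).comp L :=
    ContinuousLinearMap.ext fun v => by simpa using L.adjoint_inner_left v g
  rw [hasGradientAt_iff_hasFDerivAt, h_dual]
  exact (hasGradientAt_iff_hasFDerivAt.1 hf).comp x L.hasFDerivAt

section
variable {N M : Type*} [Fintype N] [Fintype M]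

theorem pullE_apply (φ : N → M) (y : EuclideanSpace ℝ M) (i : N) : pullE φ y i = y (φ i) :=
  rfl

variable [DecidableEq M]

theorem pushE_apply (φ : N → M) (x : EuclideanSpace ℝ N) (j : M) :
    pushE φ x j = ∑ i, if φ i = j then x i else 0 :=
  rfl

theorem inner_pushE_left (φ : N → M) (x : EuclideanSpace ℝ N) (v : EuclideanSpace ℝ M) :
    inner ℝ (pushE φ x) v = inner ℝ x (pullE φ v) := by
  simp only [PiLp.inner_apply, RCLike.inner_apply, conj_trivial, pushE_apply, pullE_apply,
    Finset.mul_sum, mul_ite, mul_zero]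
  rw [Finset.sum_comm]
  simp

theorem pushE_eq_adjoint_pullE (φ : N → M) : pushE φ = LinearMap.adjoint (pullE φ) :=
  (LinearMap.eq_adjoint_iff _ _).2 (inner_pushE_left φ)

theorem gradient_comp_pullE (φ : N → M) {f : EuclideanSpace ℝ N → ℝ} {y : EuclideanSpace ℝ M}
    (hf : DifferentiableAt ℝ f (pullE φ y)) :
    gradient (fun y => f (pullE φ y)) y = pushE φ (gradient f (pullE φ y)) := by
  rw [pushE_eq_adjoint_pullE]
  exact (hf.hasGradientAt.comp_continuousLinearMap (pullE φ).toContinuousLinearMap).gradient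

end

theorem gradient_descent_natural_general {N M : Type*} [Fintype N] [Fintype M] [DecidableEq M]
    (φ : N → M) (f : EuclideanSpace ℝ N → ℝ) (hf : ContDiff ℝ 1 f)
    (γ : ℝ) (y : EuclideanSpace ℝ M) :
    y - γ • gradient (fun y => f (pullE φ y)) y =
      y + pushE φ ((pullE φ y - γ • gradient f (pullE φ y)) - pullE φ y) := by
  rw [gradient_comp_pullE φ (hf.differentiable one_ne_zero _), sub_sub_cancel_left, map_neg,
    map_smul, ← sub_eq_add_neg]

/-- Naturality of gradient descent: applying gradient descent with step size `γ` to the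
composite problem `f ∘ φ^*` agrees with transporting the gradient-descent system of `f`
along the discrete-dynamics functor `Dynam_D(φ) : v ↦ id + φ_* ∘ (v - id) ∘ φ^*`. -/
theorem gradient_descent_natural {N M : Type*} [Fintype N] [Fintype M] [DecidableEq M]
    (φ : N → M) (f : EuclideanSpace ℝ N → ℝ) (hf : ContDiff ℝ 1 f)
    (γ : ℝ) (hγ : 0 < γ) (y : EuclideanSpace ℝ M) :
    y - γ • gradient (fun y => f (pullE φ y)) y =
      y + pushE φ ((pullE φ y - γ • gradient f (pullE φ y)) - pullE φ y) :=
  gradient_descent_natural_general φ f hf γ y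
end

section
/- The discrete dynamical systems assignment Dynam_D(φ)(v) = id_{ℝ^M} + φ_* ∘ (v - id_{ℝ^N}) ∘ φ^* is functorial: Dynam_D(id_N)(v) = v and Dynam_D(ψ ∘ φ) = Dynam_D(ψ) ∘ Dynam_D(φ) for composable functions φ : N → M and ψ : M → K between finite sets, that is, id + ψ_* ∘ ((id + φ_* ∘ (v - id) ∘ φ^*) - id) ∘ ψ^* = id + (ψ∘φ)_* ∘ (v - id) ∘ (ψ∘φ)^*. -/
/-- Pushforward along `φ : N → M`: sums inputs over preimages. -/
noncomputable def pushforward {N M : Type*} [Fintype N] [DecidableEq M] (φ : N → M) :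
    (N → ℝ) →ₗ[ℝ] (M → ℝ) where
  toFun x := fun j => ∑ i, if φ i = j then x i else 0
  map_add' x y := by
    funext j
    simp only [Pi.add_apply]
    rw [← Finset.sum_add_distrib]
    exact Finset.sum_congr rfl fun i _ => by split_ifs <;> simp
  map_smul' c x := by
    funext j
    simp only [Pi.smul_apply, smul_eq_mul, RingHom.id_apply]
    rw [Finset.mul_sum]
    exact Finset.sum_congr rfl fun i _ => by split_ifs <;> simp

/-- Pullback along `φ : N → M`: precomposition with `φ`. -/
def pullback {N M : Type*} (φ : N → M) : (M → ℝ) →ₗ[ℝ] (N → ℝ) where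
  toFun y := fun i => y (φ i)
  map_add' _ _ := rfl
  map_smul' _ _ := rfl

/-- The discrete-dynamics functor: `Dynam_D(φ)(v) = id + φ_* ∘ (v - id) ∘ φ^*`. -/
noncomputable def DynamD {N M : Type*} [Fintype N] [DecidableEq M] (φ : N → M)
    (v : (N → ℝ) → (N → ℝ)) : (M → ℝ) → (M → ℝ) :=
  fun y => y + pushforward φ (v (pullback φ y) - pullback φ y)

/-- Functoriality of `Dynam_D`: identities and composites are preserved; concretely,
`id + ψ_* ∘ ((id + φ_* ∘ (v - id) ∘ φ^*) - id) ∘ ψ^* = id + (ψ∘φ)_* ∘ (v - id) ∘ (ψ∘φ)^*`. -/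
theorem DynamD_functorial {N M K : Type*} [Fintype N] [Fintype M] [DecidableEq N]
    [DecidableEq M] [DecidableEq K] (φ : N → M) (ψ : M → K) :
    (∀ v : (N → ℝ) → (N → ℝ), DynamD (id : N → N) v = v) ∧
      (∀ v : (N → ℝ) → (N → ℝ), DynamD (ψ ∘ φ) v = DynamD ψ (DynamD φ v)) := by
  have pushid : ∀ (x : N → ℝ), pushforward (id : N → N) x = x := by
    intro x; funext j
    simp [pushforward]
  have pushcomp : ∀ (x : N → ℝ),
      pushforward ψ (pushforward φ x) = pushforward (ψ ∘ φ) x := by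
    intro x; funext k
    simp only [pushforward, LinearMap.coe_mk, AddHom.coe_mk, Function.comp_apply]
    have h1 : ∀ j : M, (if ψ j = k then ∑ i : N, if φ i = j then x i else 0 else 0)
        = ∑ i : N, if φ i = j ∧ ψ j = k then x i else 0 := by
      intro j; split_ifs with h <;> simp [h]
    simp only [h1]
    rw [Finset.sum_comm]
    refine Finset.sum_congr rfl fun i _ => ?_
    rw [Finset.sum_eq_single (φ i)]
    · simp
    · intro b _ hb; simp [Ne.symm hb]
    · simp
  constructor
  · intro v
    funext y
    simp [DynamD, pushid, pullback]
  · intro v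
    funext y
    simp only [DynamD]
    have hpb : pullback (ψ ∘ φ) y = pullback φ (pullback ψ y) := rfl
    rw [hpb, ← pushcomp]
    congr 1
    congr 1
    simp [pullback]
end
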